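/- arXiv:1511.00788 — 2 statements merged into one kernel-verified Lean document; each statement's English description precedes it below -/
import Mathlib

section
/- Let A and B be associative rings with identity, f : A → B a ring homomorphism, and J a proper two-sided ideal of B. Assume J contains a regular central element of B. Then the amalgamation A⋈fJ is a weak Armendariz ring if and only if both A and the subring f(A)+J of B are weak Armendariz rings. -/
open Polynomial

/-- A ring `R` is Armendariz if whenever `p * q = 0` for polynomials over `R`,
every product of a coefficient of `p` with a coefficient of `q` is zero. -/
def IsArmendariz (R : Type*) [Ring R] : Prop :=
  ∀ p q : R[X], p * q = 0 → ∀ i j : ℕ, p.coeff i * q.coeff j = 0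

/-- A ring `R` is nil-Armendariz if whenever every coefficient of `p * q` is nilpotent,
every product of a coefficient of `p` with a coefficient of `q` is nilpotent. -/
def IsNilArmendariz (R : Type*) [Ring R] : Prop :=
  ∀ p q : R[X], (∀ k : ℕ, IsNilpotent ((p * q).coeff k)) →
    ∀ i j : ℕ, IsNilpotent (p.coeff i * q.coeff j)

/-- A ring `R` is weak Armendariz if whenever `p * q = 0` for polynomials over `R`,
every product of a coefficient of `p` with a coefficient of `q` is nilpotent. -/
def IsWeakArmendariz (R : Type*) [Ring R] : Prop :=
  ∀ p q : R[X], p * q = 0 → ∀ i j : ℕ, IsNilpotent (p.coeff i * q.coeff j)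

/-- The amalgamation `A ⋈^f J = {(a, f a + j) | a ∈ A, j ∈ J}` of `A` and `B` along the
two-sided ideal `J` with respect to `f`, as a subring of `A × B`.  (A pair `(a, b)` has the
form `(a, f a + j)` with `j ∈ J` iff `b - f a ∈ J`.) -/
def amalgamation {A B : Type*} [Ring A] [Ring B] (f : A →+* B) (J : TwoSidedIdeal B) :
    Subring (A × B) where
  carrier := {p | p.2 - f p.1 ∈ J}
  zero_mem' := by simp [J.zero_mem]
  one_mem' := by simp [J.zero_mem]
  add_mem' := by
    intro x y hx hy
    have e : (x + y).2 - f ((x + y).1) = (x.2 - f x.1) + (y.2 - f y.1) := by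
      simp only [Prod.snd_add, Prod.fst_add, map_add]; abel
    show (x + y).2 - f ((x + y).1) ∈ J
    rw [e]; exact J.add_mem hx hy
  neg_mem' := by
    intro x hx
    have e : (-x).2 - f ((-x).1) = -(x.2 - f x.1) := by
      simp only [Prod.snd_neg, Prod.fst_neg, map_neg]; abel
    show (-x).2 - f ((-x).1) ∈ J
    rw [e]; exact J.neg_mem hx
  mul_mem' := by
    intro x y hx hy
    have e : (x * y).2 - f ((x * y).1) = x.2 * (y.2 - f y.1) + (x.2 - f x.1) * f y.1 := by
      simp only [Prod.snd_mul, Prod.fst_mul, map_mul, mul_sub, sub_mul]; abel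
    show (x * y).2 - f ((x * y).1) ∈ J
    rw [e]; exact J.add_mem (J.mul_mem_left _ _ hy) (J.mul_mem_right _ _ hx)

/-- The subring `f(A) + J = {f a + j | a ∈ A, j ∈ J}` of `B`.  (An element `b` has the form
`f a + j` with `j ∈ J` iff `b - f a ∈ J` for some `a`.) -/
def imageAddIdeal {A B : Type*} [Ring A] [Ring B] (f : A →+* B) (J : TwoSidedIdeal B) :
    Subring B where
  carrier := {b | ∃ a : A, b - f a ∈ J}
  zero_mem' := ⟨0, by simp [J.zero_mem]⟩
  one_mem' := ⟨1, by simp [J.zero_mem]⟩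
  add_mem' := by
    rintro x y ⟨a, ha⟩ ⟨b, hb⟩
    refine ⟨a + b, ?_⟩
    have e : x + y - f (a + b) = (x - f a) + (y - f b) := by
      rw [map_add]; abel
    rw [e]; exact J.add_mem ha hb
  neg_mem' := by
    rintro x ⟨a, ha⟩
    refine ⟨-a, ?_⟩
    have e : -x - f (-a) = -(x - f a) := by rw [map_neg]; abel
    rw [e]; exact J.neg_mem ha
  mul_mem' := by
    rintro x y ⟨a, ha⟩ ⟨b, hb⟩
    refine ⟨a * b, ?_⟩
    have e : x * y - f (a * b) = x * (y - f b) + (x - f a) * f b := by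
      rw [map_mul, mul_sub, sub_mul]; abel
    rw [e]; exact J.add_mem (J.mul_mem_left _ _ hb) (J.mul_mem_right _ _ ha)

/-! The amalgamation `A ⋈^f J` contains `A` via `a ↦ (a, f a)` and embeds into
`A × (f(A) + J)`; being weak Armendariz passes to subrings and to products, which gives
everything except that `f(A) + J` inherits the property from `A ⋈^f J`. For that, the additive
map `b ↦ (0, s b)` into `A ⋈^f J`, with `s ∈ J` regular and central, turns a product `x y` into
`(0, s² x y)`, and `s² x y` is nilpotent only if `x y` is, because `s²` is central and regular. -/

namespace Polynomial

variable {R S : Type*} [Semiring R] [Semiring S]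

noncomputable def mapAdd (ψ : R →+ S) (p : R[X]) : S[X] :=
  ∑ n ∈ p.support, monomial n (ψ (p.coeff n))

@[simp]
theorem coeff_mapAdd (ψ : R →+ S) (p : R[X]) (n : ℕ) : (p.mapAdd ψ).coeff n = ψ (p.coeff n) := by
  classical
  simp only [mapAdd, finsetSum_coeff, coeff_monomial, Finset.sum_ite_eq', mem_support_iff]
  split_ifs with h
  · rfl
  · rw [not_not.mp h, map_zero]

theorem mapAdd_mul_mapAdd {ψ θ : R →+ S} (hψθ : ∀ x y, ψ x * ψ y = θ (x * y)) (p q : R[X]) :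
    p.mapAdd ψ * q.mapAdd ψ = (p * q).mapAdd θ := by
  ext k
  simp only [coeff_mul, coeff_mapAdd, hψθ, map_sum]

end Polynomial

theorem Prod.isNilpotent_iff {R S : Type*} [Semiring R] [Semiring S] {x : R × S} :
    IsNilpotent x ↔ IsNilpotent x.1 ∧ IsNilpotent x.2 := by
  refine ⟨fun h => ⟨h.map (RingHom.fst R S), h.map (RingHom.snd R S)⟩, ?_⟩
  rintro ⟨⟨m, hm⟩, ⟨n, hn⟩⟩
  exact ⟨m + n, Prod.ext (by simp [pow_add, hm]) (by simp [pow_add, hn])⟩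

namespace IsWeakArmendariz

variable {R S : Type*} [Ring R] [Ring S]

theorem isNilpotent_map_mul (h : IsWeakArmendariz S) (φ : R →+* S) {p q : R[X]} (hpq : p * q = 0)
    (i j : ℕ) : IsNilpotent (φ (p.coeff i * q.coeff j)) := by
  have hnil := h (p.map φ) (q.map φ) (by rw [← Polynomial.map_mul, hpq, Polynomial.map_zero]) i j
  rwa [coeff_map, coeff_map, ← map_mul] at hnil

theorem of_injective (h : IsWeakArmendariz S) (φ : R →+* S) (hφ : Function.Injective φ) :
    IsWeakArmendariz R := fun _ _ hpq i j =>
  (IsNilpotent.map_iff hφ).mp (h.isNilpotent_map_mul φ hpq i j)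

theorem prod (hR : IsWeakArmendariz R) (hS : IsWeakArmendariz S) : IsWeakArmendariz (R × S) :=
  fun _ _ hpq i j => Prod.isNilpotent_iff.mpr
    ⟨hR.isNilpotent_map_mul (RingHom.fst R S) hpq i j,
      hS.isNilpotent_map_mul (RingHom.snd R S) hpq i j⟩

theorem of_addMonoidHom (h : IsWeakArmendariz S) (ψ θ : R →+ S)
    (hψθ : ∀ x y, ψ x * ψ y = θ (x * y)) (hθ : ∀ z, IsNilpotent (θ z) → IsNilpotent z) :
    IsWeakArmendariz R := by
  intro p q hpq i j
  have hmap : p.mapAdd ψ * q.mapAdd ψ = 0 := by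
    rw [mapAdd_mul_mapAdd hψθ, hpq]
    ext k
    simp
  have hnil := h _ _ hmap i j
  rw [coeff_mapAdd, coeff_mapAdd, hψθ] at hnil
  exact hθ _ hnil

end IsWeakArmendariz

namespace amalgamation

variable {A B : Type*} [Ring A] [Ring B] (f : A →+* B) (J : TwoSidedIdeal B)

theorem mem_iff {x : A × B} : x ∈ amalgamation f J ↔ x.2 - f x.1 ∈ J := Iff.rfl

def inl : A →+* amalgamation f J :=
  ((RingHom.id A).prod f).codRestrict _ fun a => by simp [mem_iff]

theorem inl_injective : Function.Injective (inl f J) :=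
  fun _ _ h => congrArg (fun x : amalgamation f J => (x : A × B).1) h

def toProd : amalgamation f J →+* A × imageAddIdeal f J :=
  ((RingHom.fst A B).comp (amalgamation f J).subtype).prod
    (((RingHom.snd A B).comp (amalgamation f J).subtype).codRestrict _ fun x => ⟨x.1.1, x.2⟩)

theorem toProd_injective : Function.Injective (toProd f J) := fun x y h => by
  have h₁ := congrArg Prod.fst h
  have h₂ := congrArg (fun z => (z.2 : B)) h
  exact Subtype.ext (Prod.ext h₁ h₂)

variable {s : B}

def zeroMul (hs : s ∈ J) : B →+ amalgamation f J where
  toFun b := ⟨(0, s * b), by simpa [mem_iff] using J.mul_mem_right s b hs⟩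
  map_zero' := by ext <;> simp
  map_add' _ _ := by ext <;> simp [mul_add]

variable {f J}

theorem zeroMul_mul_zeroMul (hs : s ∈ J) (hcomm : ∀ b, Commute s b) (x y : B) :
    zeroMul f J hs x * zeroMul f J hs y = zeroMul f J (J.mul_mem_left s s hs) (x * y) := by
  ext
  · simp [zeroMul]
  · simp [zeroMul, mul_assoc, (hcomm x).left_comm]

theorem isNilpotent_zeroMul (hs : s ∈ J) (hcomm : ∀ b, Commute s b)
    (hreg : s ∈ nonZeroDivisorsLeft B) {b : B} (hb : IsNilpotent (zeroMul f J hs b)) :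
    IsNilpotent b := by
  have hsb : IsNilpotent (s * b) := hb.map ((RingHom.snd A B).comp (amalgamation f J).subtype)
  exact ((hcomm b).isNilpotent_mul_left_iff hreg).mp hsb

theorem isWeakArmendariz_imageAddIdeal (h : IsWeakArmendariz (amalgamation f J)) (hs : s ∈ J)
    (hcomm : ∀ b, Commute s b) (hreg : s ∈ nonZeroDivisorsLeft B) :
    IsWeakArmendariz (imageAddIdeal f J) := by
  have hss : s * s ∈ J := J.mul_mem_left s s hs
  have hcomm₂ : ∀ b, Commute (s * s) b := fun b => (hcomm b).mul_left (hcomm b)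
  have hreg₂ : s * s ∈ nonZeroDivisorsLeft B := mul_mem hreg hreg
  let val : imageAddIdeal f J →+ B := (imageAddIdeal f J).subtype.toAddMonoidHom
  exact h.of_addMonoidHom ((zeroMul f J hs).comp val) ((zeroMul f J hss).comp val)
    (fun x y => zeroMul_mul_zeroMul hs hcomm x y) fun z hz =>
      (IsNilpotent.map_iff (imageAddIdeal f J).subtype_injective).mp
        (isNilpotent_zeroMul hss hcomm₂ hreg₂ hz)

end amalgamation

theorem stmt_14_general {A B : Type*} [Ring A] [Ring B] (f : A →+* B) (J : TwoSidedIdeal B)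
    (hs : ∃ s ∈ J, (∀ b : B, s * b = b * s) ∧
      (∀ b : B, s * b = 0 → b = 0) ∧ (∀ b : B, b * s = 0 → b = 0)) :
    IsWeakArmendariz (amalgamation f J) ↔ IsWeakArmendariz A ∧ IsWeakArmendariz (imageAddIdeal f J) := by
  obtain ⟨s, hsJ, hcomm, hreg, -⟩ := hs
  refine ⟨fun h => ⟨h.of_injective _ (amalgamation.inl_injective f J),
    amalgamation.isWeakArmendariz_imageAddIdeal h hsJ hcomm hreg⟩, fun ⟨hA, hS⟩ => ?_⟩
  exact (hA.prod hS).of_injective _ (amalgamation.toProd_injective f J)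

theorem stmt_14 {A B : Type*} [Ring A] [Ring B] (f : A →+* B) (J : TwoSidedIdeal B)
    (hJ : (1 : B) ∉ J)
    (hs : ∃ s ∈ J, (∀ b : B, s * b = b * s) ∧
      (∀ b : B, s * b = 0 → b = 0) ∧ (∀ b : B, b * s = 0 → b = 0)) :
    IsWeakArmendariz (amalgamation f J) ↔ IsWeakArmendariz A ∧ IsWeakArmendariz (imageAddIdeal f J) :=
  stmt_14_general f J hs
end

section
/- Let A and B be associative rings with identity, f : A → B a ring homomorphism, and J a proper two-sided ideal of B. Assume J ⊆ nil(B), i.e., every element of J is nilpotent. Then the amalgamation A⋈fJ is a weak Armendariz ring if and only if A is a weak Armendariz ring. -/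
open Polynomial

/-!
Both directions come from one transfer principle: a ring with a homomorphism with nil kernel
into a weak Armendariz ring is weak Armendariz, since `p * q = 0` maps to a vanishing product
downstairs and nilpotency of `g (p_i q_j)` lifts back through the nil kernel. The diagonal
`a ↦ (a, f a)` embeds `A` into `A ⋈^f J`, and the projection `A ⋈^f J → A` has kernel
`0 × J`, which is nil when `J` is.
-/

lemma IsNilpotent.of_map_of_ker_nil {R S : Type*} [Ring R] [Ring S] (g : R →+* S)
    (hg : ∀ r, g r = 0 → IsNilpotent r) {r : R} (hr : IsNilpotent (g r)) : IsNilpotent r := by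
  obtain ⟨k, hk⟩ := hr
  exact IsNilpotent.of_pow (hg _ (by rw [map_pow, hk]))

lemma IsWeakArmendariz.of_ringHom_of_ker_nil {R S : Type*} [Ring R] [Ring S] (g : R →+* S)
    (hg : ∀ r, g r = 0 → IsNilpotent r) (hS : IsWeakArmendariz S) : IsWeakArmendariz R := by
  intro p q hpq i j
  have hmap : p.map g * q.map g = 0 := by rw [← Polynomial.map_mul, hpq, Polynomial.map_zero]
  have hnil := hS _ _ hmap i j
  rw [coeff_map, coeff_map, ← map_mul] at hnil
  exact hnil.of_map_of_ker_nil g hg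

lemma IsWeakArmendariz.of_injective_s15 {R S : Type*} [Ring R] [Ring S] (g : R →+* S)
    (hg : Function.Injective g) (hS : IsWeakArmendariz S) : IsWeakArmendariz R :=
  hS.of_ringHom_of_ker_nil g fun r hr ↦ ⟨1, by rw [pow_one, (map_eq_zero_iff g hg).mp hr]⟩

namespace amalgamation

variable {A B : Type*} [Ring A] [Ring B] (f : A →+* B) (J : TwoSidedIdeal B)

def diag : A →+* amalgamation f J :=
  ((RingHom.id A).prod f).codRestrict _ fun a ↦ show f a - f a ∈ J by simp [J.zero_mem]

lemma diag_injective : Function.Injective (diag f J) :=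
  fun _ _ h ↦ congrArg (fun x : amalgamation f J ↦ x.1.1) h

def fst : amalgamation f J →+* A :=
  (RingHom.fst A B).comp (amalgamation f J).subtype

lemma isNilpotent_of_fst_eq_zero (hJ : ∀ b ∈ J, IsNilpotent b) (x : amalgamation f J)
    (hx : fst f J x = 0) : IsNilpotent x := by
  have hx₁ : x.1.1 = 0 := hx
  have hx₂ : x.1.2 ∈ J := by
    have hmem : x.1.2 - f x.1.1 ∈ J := x.2
    rwa [hx₁, map_zero, sub_zero] at hmem
  obtain ⟨n, hn⟩ := hJ _ hx₂
  rw [← IsNilpotent.map_iff (Subring.subtype_injective _)]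
  refine ⟨n + 1, Prod.ext ?_ ?_⟩
  · simp [hx₁]
  · simp [pow_succ, hn]

end amalgamation

theorem stmt_15_general {A B : Type*} [Ring A] [Ring B] (f : A →+* B) (J : TwoSidedIdeal B)
    (h : ∀ b ∈ J, IsNilpotent b) :
    IsWeakArmendariz (amalgamation f J) ↔ IsWeakArmendariz A :=
  ⟨IsWeakArmendariz.of_injective_s15 _ (amalgamation.diag_injective f J),
    IsWeakArmendariz.of_ringHom_of_ker_nil _ (amalgamation.isNilpotent_of_fst_eq_zero f J h)⟩

theorem stmt_15 {A B : Type*} [Ring A] [Ring B] (f : A →+* B) (J : TwoSidedIdeal B)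
    (hJ : (1 : B) ∉ J)
    (h : ∀ b ∈ J, IsNilpotent b) :
    IsWeakArmendariz (amalgamation f J) ↔ IsWeakArmendariz A :=
  stmt_15_general f J h
end
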